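/- arXiv:cs/0508030 — 4 statements merged into one kernel-verified Lean document; each statement's English description precedes it below -/
import Mathlib

section
/- For every integer J ≥ 3 and every termination length L ≥ 1 there exists a real constant c₁ (depending only on J and L, not on M) such that for every integer M ≥ 1 there is a choice of the permutations π_{i,h,t} (i ∈ {0,…,J−1}, h ∈ {0,1}, t ∈ {1,…,L+J}) for which the girth g of the associated terminated Tanner graph satisfies g/4 > log M / (2 log((2J−1)(J−1))) − c₁; equivalently, there exists a code in the ensemble C_P(J,2J,M) for which the number of independent (cycle-free) belief-propagation decoding iterations l₀ satisfies l₀ > log M / (2 log((2J−1)(J−1))) − c₁. -/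
/-- The terminated Tanner graph of a code in the ensemble `C_P(J, 2J, M)` with
termination length `L`, determined by the permutations `π i h t`
(`i ∈ {0,…,J-1}`, `h ∈ {0,1}`, `t ∈ {1,…,L+J}`): symbol node `(t, h, m)` is
adjacent exactly to the `J` check nodes `(t + i, π i h t m)` for
`i ∈ {0,…,J-1}`. -/
def tannerGraph (J M L : ℕ)
    (π : Fin J → Fin 2 → Fin (L + J) → Equiv.Perm (Fin M)) :
    SimpleGraph ((Fin (L + J) × Fin 2 × Fin M) ⊕ (Fin (L + 2 * J - 1) × Fin M)) :=
  SimpleGraph.fromRel (fun a b =>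
    match a, b with
    | Sum.inl (t, h, m), Sum.inr (s, m') =>
        ∃ i : Fin J, (s : ℕ) = (t : ℕ) + (i : ℕ) ∧ m' = π i h t m
    | _, _ => False)

/-!
Gallager's edge-switching argument. Among the permutation families whose Tanner graph has girth
at least `k`, take one with the fewest edges on cycles of length `≤ k`. If there is such an edge
`uv`, then, once `M > 24 D^⌈k/2⌉` with `D = (2J-1)(J-1)`, counting balls of radius `k` gives an
edge `u₂v₂` at the same position `(i, h, t)` whose endpoints are at distance `> k` from `u` and
`v`. Composing `π i h t` with a transposition switches `uv, u₂v₂` to `uv₂, u₂v`; this creates no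
cycle of length `≤ k` and removes `uv`, contradicting minimality. Hence girth `K` is reached once
`M > 24 D^⌊K/2⌋`, i.e. `g ≳ 2 log M / log D`. The ball bound comes from the growth of spheres,
which from distance `ℓ ≥ 1` to `ℓ + 2` grow by at most the factor `D`.
-/

open Finset

lemma sum_range_pow_div_two_le {D : ℕ} (hD : 2 ≤ D) :
    ∀ k, ∑ ℓ ∈ range (k + 1), D ^ ((ℓ + 1) / 2) ≤ 4 * D ^ ((k + 1) / 2)
  | 0 => by simp
  | 1 => by simp [sum_range_succ]; omega
  | k + 2 => by
    have ih := sum_range_pow_div_two_le hD k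
    have h₁ : D ^ ((k + 2) / 2) ≤ D * D ^ ((k + 1) / 2) := by
      rw [← pow_succ']; exact Nat.pow_le_pow_right (by omega) (by omega)
    have h₂ := Nat.mul_le_mul_right (D ^ ((k + 1) / 2)) hD
    rw [sum_range_succ, sum_range_succ, show (k + 2 + 1) / 2 = (k + 1) / 2 + 1 by omega,
      show k + 1 + 1 = k + 2 by rfl, pow_succ']
    omega

namespace SimpleGraph

variable {V : Type*}

lemma lt_edist_of_notMem_ball {G : SimpleGraph V} {u y : V} {k : ℕ} (h : y ∉ G.ball u (k + 1)) :
    (k : ℕ∞) < G.edist u y := by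
  rw [mem_ball, not_lt, edist_comm] at h
  exact (ENat.add_one_le_iff (ENat.natCast_ne_top k)).1 h

section Spheres

variable [Fintype V]

noncomputable def sphereFinset (G : SimpleGraph V) (c : V) (ℓ : ℕ) : Finset V :=
  {v | G.edist v c = ℓ}

variable {G : SimpleGraph V} {c v : V} {ℓ : ℕ}

@[simp]
lemma mem_sphereFinset : v ∈ G.sphereFinset c ℓ ↔ G.edist v c = ℓ := by
  simp [sphereFinset]

lemma sphereFinset_zero : G.sphereFinset c 0 = {c} := by
  ext v
  simp [edist_eq_zero_iff]

lemma exists_adj_mem_sphereFinset (hv : v ∈ G.sphereFinset c (ℓ + 1)) :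
    ∃ z ∈ G.sphereFinset c ℓ, G.Adj v z := by
  rw [mem_sphereFinset] at hv
  obtain ⟨p, hp⟩ := exists_walk_of_edist_eq_coe hv
  cases p with
  | nil => simp at hp
  | @cons _ z _ h q =>
    refine ⟨z, ?_, h⟩
    have hle : G.edist z c ≤ ℓ := (edist_le q).trans (by simp_all)
    obtain ⟨n, hn, hnℓ⟩ := ENat.le_natCast_iff.1 hle
    have hge : G.edist v c ≤ 1 + G.edist z c := by
      simpa [edist_eq_one_iff_adj.2 h] using G.edist_triangle (u := v) (v := z) (w := c)
    rw [hv, hn] at hge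
    rw [mem_sphereFinset, hn]
    norm_cast at hge ⊢
    omega

lemma mem_biUnion_sphereFinset_of_mem_ball [DecidableEq V] {k : ℕ} (hv : v ∈ G.ball c (k + 1)) :
    v ∈ (range (k + 1)).biUnion (G.sphereFinset c) := by
  rw [mem_ball] at hv
  obtain ⟨n, hn, hnk⟩ := ENat.le_natCast_iff.1 (Order.le_of_lt_add_one hv)
  exact mem_biUnion.2 ⟨n, mem_range.2 (by omega), mem_sphereFinset.2 hn⟩

variable [DecidableRel G.Adj]

/-- `D` bounds the growth of spheres over two steps; for a biregular bipartite graph take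
`w = degree - 1`. -/
structure IsGrowthWeight (G : SimpleGraph V) [DecidableRel G.Adj] (w : V → ℕ) (D : ℕ) : Prop where
  pos : ∀ x, 0 < w x
  degree_le : ∀ x, G.degree x ≤ w x + 1
  mul_le : ∀ x y, G.Adj x y → w x * w y ≤ D

variable {w : V → ℕ} {D : ℕ}

lemma IsGrowthWeight.mul_sum_le (hw : G.IsGrowthWeight w D) {p : V} {F : Finset V}
    (hF : F ⊆ G.neighborFinset p) : w p * ∑ z ∈ F, w z ≤ #F * D := by
  rw [mul_sum, ← smul_eq_mul, ← sum_const]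
  exact sum_le_sum fun z hz ↦ hw.mul_le p z ((mem_neighborFinset _ _ _).1 (hF hz))

lemma IsGrowthWeight.degree_le_two_mul (hw : G.IsGrowthWeight w D) (c : V) :
    G.degree c ≤ 2 * D := by
  obtain h | ⟨y, hy⟩ := (G.degree c).eq_zero_or_pos.imp_right (G.degree_pos_iff_exists_adj c).1
  · omega
  · have := hw.pos c
    have := hw.degree_le c
    have := hw.mul_le c y hy
    have := Nat.le_mul_of_pos_right (w c) (hw.pos y)
    omega

lemma IsGrowthWeight.card_sphereFinset_one_le (hw : G.IsGrowthWeight w D) :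
    #(G.sphereFinset c 1) ≤ 2 * D := by
  refine le_trans (card_le_card fun v hv ↦ ?_) (hw.degree_le_two_mul c)
  obtain ⟨z, hz, hvz⟩ := exists_adj_mem_sphereFinset hv
  rw [sphereFinset_zero, mem_singleton] at hz
  exact (mem_neighborFinset _ _ _).2 (hz ▸ hvz.symm)

variable [DecidableEq V]

lemma sphereFinset_succ_subset :
    G.sphereFinset c (ℓ + 1) ⊆
      (G.sphereFinset c ℓ).biUnion fun z ↦ G.neighborFinset z ∩ G.sphereFinset c (ℓ + 1) := by
  intro v hv
  obtain ⟨z, hz, hvz⟩ := exists_adj_mem_sphereFinset hv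
  exact mem_biUnion.2 ⟨z, hz, mem_inter.2 ⟨(mem_neighborFinset _ _ _).2 hvz.symm, hv⟩⟩

lemma card_neighborFinset_inter_sphereFinset_lt {z : V} (hz : z ∈ G.sphereFinset c (ℓ + 1)) :
    #(G.neighborFinset z ∩ G.sphereFinset c (ℓ + 2)) < G.degree z := by
  obtain ⟨p, hp, hzp⟩ := exists_adj_mem_sphereFinset hz
  rw [← card_neighborFinset_eq_degree]
  refine card_lt_card ⟨inter_subset_left, fun h ↦ ?_⟩
  have hp₂ := mem_sphereFinset.1 (mem_inter.1 (h ((mem_neighborFinset _ _ _).2 hzp))).2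
  rw [mem_sphereFinset.1 hp] at hp₂
  norm_cast at hp₂
  omega

lemma IsGrowthWeight.card_sphereFinset_add_two_le (hw : G.IsGrowthWeight w D) :
    #(G.sphereFinset c (ℓ + 2)) ≤
      ∑ p ∈ G.sphereFinset c ℓ, ∑ z ∈ G.neighborFinset p ∩ G.sphereFinset c (ℓ + 1), w z := by
  calc #(G.sphereFinset c (ℓ + 2))
      ≤ #((G.sphereFinset c ℓ).biUnion fun p ↦
          (G.neighborFinset p ∩ G.sphereFinset c (ℓ + 1)).biUnion fun z ↦
            G.neighborFinset z ∩ G.sphereFinset c (ℓ + 2)) := by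
        refine card_le_card fun v hv ↦ ?_
        obtain ⟨z, hz, hvz⟩ := mem_biUnion.1 (sphereFinset_succ_subset hv)
        obtain ⟨p, hp, hzp⟩ := mem_biUnion.1 (sphereFinset_succ_subset hz)
        exact mem_biUnion.2 ⟨p, hp, mem_biUnion.2 ⟨z, hzp, hvz⟩⟩
    _ ≤ ∑ p ∈ G.sphereFinset c ℓ, ∑ z ∈ G.neighborFinset p ∩ G.sphereFinset c (ℓ + 1),
          #(G.neighborFinset z ∩ G.sphereFinset c (ℓ + 2)) :=
        card_biUnion_le.trans (sum_le_sum fun _ _ ↦ card_biUnion_le)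
    _ ≤ _ := by
        gcongr with p _ z hz
        have := card_neighborFinset_inter_sphereFinset_lt (mem_inter.1 hz).2
        have := hw.degree_le z
        omega

lemma IsGrowthWeight.card_sphereFinset_two_le (hw : G.IsGrowthWeight w D) :
    #(G.sphereFinset c 2) ≤ 2 * D := by
  refine (hw.card_sphereFinset_add_two_le (ℓ := 0)).trans ?_
  rw [sphereFinset_zero, sum_singleton]
  refine le_of_mul_le_mul_left ((hw.mul_sum_le inter_subset_left).trans ?_) (hw.pos c)
  have h₁ := card_le_card (inter_subset_left (s₁ := G.neighborFinset c) (s₂ := G.sphereFinset c 1))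
  rw [card_neighborFinset_eq_degree] at h₁
  have h₂ := Nat.mul_le_mul_right D (h₁.trans (hw.degree_le c))
  have h₃ := hw.pos c
  nlinarith

lemma IsGrowthWeight.card_sphereFinset_add_three_le (hw : G.IsGrowthWeight w D) :
    #(G.sphereFinset c (ℓ + 3)) ≤ D * #(G.sphereFinset c (ℓ + 1)) := by
  refine hw.card_sphereFinset_add_two_le.trans ?_
  rw [mul_comm, ← smul_eq_mul, ← sum_const]
  refine sum_le_sum fun p hp ↦ le_of_mul_le_mul_left ?_ (hw.pos p)
  refine (hw.mul_sum_le inter_subset_left).trans (Nat.mul_le_mul_right D ?_)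
  have hp' : #(G.neighborFinset p ∩ G.sphereFinset c (ℓ + 1 + 1)) < G.degree p :=
    card_neighborFinset_inter_sphereFinset_lt hp
  have := hw.degree_le p
  omega

lemma IsGrowthWeight.card_sphereFinset_le (hw : G.IsGrowthWeight w D) :
    ∀ ℓ, #(G.sphereFinset c ℓ) ≤ 2 * D ^ ((ℓ + 1) / 2)
  | 0 => by simp [sphereFinset_zero]
  | 1 => by simpa using hw.card_sphereFinset_one_le
  | 2 => by simpa using hw.card_sphereFinset_two_le
  | ℓ + 3 => by
    calc #(G.sphereFinset c (ℓ + 3)) ≤ D * #(G.sphereFinset c (ℓ + 1)) :=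
          hw.card_sphereFinset_add_three_le
      _ ≤ D * (2 * D ^ ((ℓ + 1 + 1) / 2)) := Nat.mul_le_mul_left D (hw.card_sphereFinset_le _)
      _ = 2 * D ^ ((ℓ + 3 + 1) / 2) := by
          rw [show (ℓ + 3 + 1) / 2 = (ℓ + 1 + 1) / 2 + 1 by omega, pow_succ]
          ring

theorem IsGrowthWeight.ncard_ball_le (hw : G.IsGrowthWeight w D) (hD : 2 ≤ D) (c : V) (k : ℕ) :
    (G.ball c (k + 1)).ncard ≤ 8 * D ^ ((k + 1) / 2) := by
  calc (G.ball c (k + 1)).ncard ≤ #((range (k + 1)).biUnion (G.sphereFinset c)) := by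
        rw [← Set.ncard_coe_finset]
        exact Set.ncard_le_ncard fun v hv ↦ mem_biUnion_sphereFinset_of_mem_ball hv
    _ ≤ ∑ ℓ ∈ range (k + 1), 2 * D ^ ((ℓ + 1) / 2) :=
        card_biUnion_le.trans (sum_le_sum fun ℓ _ ↦ hw.card_sphereFinset_le ℓ)
    _ ≤ 8 * D ^ ((k + 1) / 2) := by
        rw [← mul_sum]
        have := sum_range_pow_div_two_le hD k
        omega

end Spheres

section Switch

variable {G G' : SimpleGraph V}

namespace Walk

lemma exists_eq_append_cons_of_mem_edges {a b x y : V} (W : G.Walk a b) (h : s(x, y) ∈ W.edges) :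
    ∃ (x' y' : V) (α : G.Walk a x') (hxy : G.Adj x' y') (β : G.Walk y' b),
      s(x', y') = s(x, y) ∧ s(x, y) ∉ α.edges ∧ W = α.append (cons hxy β) := by
  induction W with
  | nil => simp at h
  | @cons a a' b hadj W ih =>
    by_cases hfirst : s(a, a') = s(x, y)
    · exact ⟨a, a', nil, hadj, W, hfirst, by simp, rfl⟩
    · rw [edges_cons, List.mem_cons] at h
      obtain ⟨x', y', α, hxy, β, he, hα, rfl⟩ := ih (h.resolve_left (Ne.symm hfirst))
      refine ⟨x', y', cons hadj α, hxy, β, he, ?_, rfl⟩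
      rw [edges_cons, List.mem_cons, not_or]
      exact ⟨Ne.symm hfirst, hα⟩

lemma IsTrail.exists_walk_of_mem_edges {z a b : V} {c : G.Walk z z} (hc : c.IsTrail)
    (h : s(a, b) ∈ c.edges) : ∃ W : G.Walk a b, s(a, b) ∉ W.edges ∧ W.length + 1 = c.length := by
  obtain ⟨x, y, α, hxy, β, he, hα, rfl⟩ := c.exists_eq_append_cons_of_mem_edges h
  have hβ : s(a, b) ∉ β.edges := by
    have := hc.edges_nodup
    simp only [edges_append, edges_cons, List.nodup_append, List.nodup_cons] at this
    exact he ▸ this.2.1.1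
  have hlen : (β.append α).length + 1 = (α.append (cons hxy β)).length := by
    simp only [length_append, length_cons]; omega
  have hW : s(a, b) ∉ (β.append α).edges := by simp [hα, hβ]
  rcases Sym2.eq_iff.1 he with ⟨rfl, rfl⟩ | ⟨rfl, rfl⟩
  · exact ⟨(β.append α).reverse, by rwa [edges_reverse, List.mem_reverse], by rwa [length_reverse]⟩
  · exact ⟨β.append α, hW, hlen⟩

end Walk

lemma egirth_le_length_add_one {a b : V} (hab : G.Adj a b) (p : G.Walk b a)
    (hp : s(a, b) ∉ p.edges) : G.egirth ≤ p.length + 1 := by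
  classical
  have hc : (Walk.cons hab p.bypass).IsCycle :=
    (Walk.cons_isCycle_iff _ _).2 ⟨p.bypass_isPath, fun h ↦ hp (p.edges_bypass_subset_edges h)⟩
  calc G.egirth ≤ (Walk.cons hab p.bypass).length := egirth_le_length hc
    _ ≤ p.length + 1 := by simpa using p.length_bypass_le_length

def shortCycleEdgeSet (G : SimpleGraph V) (k : ℕ) : Set (Sym2 V) :=
  {e | ∃ (z : V) (c : G.Walk z z), c.IsCycle ∧ c.length ≤ k ∧ e ∈ c.edges}

lemma le_egirth_of_shortCycleEdgeSet_eq_empty {k : ℕ} (h : G.shortCycleEdgeSet k = ∅) :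
    k + 1 ≤ G.egirth := by
  refine le_egirth.2 fun z c hc ↦ ?_
  by_contra! hck
  cases c with
  | nil => exact hc.not_nil Walk.Nil.nil
  | @cons _ y _ hadj p =>
    have : s(z, y) ∈ G.shortCycleEdgeSet k :=
      ⟨z, _, hc, by exact_mod_cast Order.le_of_lt_add_one hck, by simp⟩
    simp [h] at this

/-- `G'` arises from `G` by switching the edges `uv`, `u₂v₂` to `uv₂`, `u₂v`. -/
structure IsSwitch (G G' : SimpleGraph V) (u v u₂ v₂ : V) : Prop where
  edgeSet_subset : G'.edgeSet ⊆ G.edgeSet ∪ {s(u, v₂), s(u₂, v)}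
  adj : G.Adj u v
  adj₂ : G.Adj u₂ v₂
  not_adj : ¬ G'.Adj u v
  not_adj₂ : ¬ G'.Adj u₂ v₂

namespace IsSwitch

variable {u v u₂ v₂ : V}

lemma symm (hs : IsSwitch G G' u v u₂ v₂) : IsSwitch G G' u₂ v₂ u v where
  edgeSet_subset := hs.edgeSet_subset.trans (by rw [Set.pair_comm])
  adj := hs.adj₂
  adj₂ := hs.adj
  not_adj := hs.not_adj₂
  not_adj₂ := hs.not_adj

lemma edges_subset_edgeSet (hs : IsSwitch G G' u v u₂ v₂) {a b : V} (W : G'.Walk a b)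
    (h₁ : s(u, v₂) ∉ W.edges) (h₂ : s(u₂, v) ∉ W.edges) : ∀ e ∈ W.edges, e ∈ G.edgeSet := by
  intro e he
  rcases hs.edgeSet_subset (W.edges_subset_edgeSet he) with he' | rfl | rfl
  · exact he'
  · exact absurd he h₁
  · exact absurd he h₂

lemma lt_length {k : ℕ} (hs : IsSwitch G G' u v u₂ v₂) (hk : k ≤ G.egirth)
    (huu₂ : k < G.edist u u₂) (huv₂ : k < G.edist u v₂) (W : G'.Walk u v₂)
    (hW : s(u, v₂) ∉ W.edges) : k < W.length := by
  by_cases h₂ : s(u₂, v) ∈ W.edges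
  · obtain ⟨x, y, α, hxy, β, he, hα, rfl⟩ := W.exists_eq_append_cons_of_mem_edges h₂
    have hαW : s(u, v₂) ∉ α.edges := fun h ↦ hW (by simp [h])
    have hαG := hs.edges_subset_edgeSet α hαW hα
    simp only [Walk.length_append, Walk.length_cons]
    rcases Sym2.eq_iff.1 he with ⟨rfl, rfl⟩ | ⟨hx, hy⟩
    · have := huu₂.trans_le (edist_le (α.transfer G hαG))
      rw [Walk.length_transfer, Nat.cast_lt] at this
      omega
    · -- `α` closes up with the edge `vu` to a cycle of `G`, and `β` has positive length
      subst x y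
      have hαuv : s(v, u) ∉ (α.transfer G hαG).edges := by
        rw [Walk.edges_transfer, Sym2.eq_swap]
        exact fun h ↦ hs.not_adj (α.edges_subset_edgeSet h)
      have hcyc := hk.trans (egirth_le_length_add_one hs.adj.symm _ hαuv)
      rw [Walk.length_transfer] at hcyc
      have hβ := Walk.not_nil_iff_lt_length.1 (Walk.not_nil_of_ne (p := β) hs.adj₂.ne)
      norm_cast at hcyc
      omega
  · have := huv₂.trans_le (edist_le (W.transfer G (hs.edges_subset_edgeSet W hW h₂)))
    rwa [Walk.length_transfer, Nat.cast_lt] at this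

lemma edges_subset_edgeSet_of_isCycle {k : ℕ} (hs : IsSwitch G G' u v u₂ v₂) (hk : k ≤ G.egirth)
    (huu₂ : k < G.edist u u₂) (huv₂ : k < G.edist u v₂) (hvu₂ : k < G.edist v u₂) {z : V}
    {c : G'.Walk z z} (hc : c.IsCycle) (hck : c.length ≤ k) : ∀ e ∈ c.edges, e ∈ G.edgeSet := by
  refine hs.edges_subset_edgeSet c (fun h ↦ ?_) (fun h ↦ ?_)
  · obtain ⟨W, hW, hlen⟩ := hc.isTrail.exists_walk_of_mem_edges h
    have := hs.lt_length hk huu₂ huv₂ W hW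
    omega
  · obtain ⟨W, hW, hlen⟩ := hc.isTrail.exists_walk_of_mem_edges h
    have := hs.symm.lt_length hk (by rwa [edist_comm]) (by rwa [edist_comm]) W hW
    omega

lemma le_egirth {k : ℕ} (hs : IsSwitch G G' u v u₂ v₂) (hk : k ≤ G.egirth)
    (huu₂ : k < G.edist u u₂) (huv₂ : k < G.edist u v₂) (hvu₂ : k < G.edist v u₂) :
    k ≤ G'.egirth := by
  refine SimpleGraph.le_egirth.2 fun z c hc ↦ ?_
  by_cases hck : c.length ≤ k
  · have hcG := hs.edges_subset_edgeSet_of_isCycle hk huu₂ huv₂ hvu₂ hc hck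
    simpa using hk.trans (egirth_le_length (hc.transfer hcG))
  · exact_mod_cast (not_le.1 hck).le

lemma shortCycleEdgeSet_ssubset {k : ℕ} (hs : IsSwitch G G' u v u₂ v₂) (hk : k ≤ G.egirth)
    (huu₂ : k < G.edist u u₂) (huv₂ : k < G.edist u v₂) (hvu₂ : k < G.edist v u₂)
    (huv : s(u, v) ∈ G.shortCycleEdgeSet k) :
    G'.shortCycleEdgeSet k ⊂ G.shortCycleEdgeSet k := by
  refine (Set.ssubset_iff_of_subset fun e he ↦ ?_).2 ⟨s(u, v), huv, ?_⟩
  · obtain ⟨z, c, hc, hck, he⟩ := he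
    have hcG := hs.edges_subset_edgeSet_of_isCycle hk huu₂ huv₂ hvu₂ hc hck
    exact ⟨z, c.transfer G hcG, hc.transfer hcG, by simpa using hck, by simpa using he⟩
  · rintro ⟨z, c, -, -, he⟩
    exact hs.not_adj (c.edges_subset_edgeSet he)

end IsSwitch

end Switch

end SimpleGraph

open SimpleGraph

section Tanner

variable {J M L : ℕ} {π : Fin J → Fin 2 → Fin (L + J) → Equiv.Perm (Fin M)}
  {t : Fin (L + J)} {h : Fin 2} {m m' : Fin M} {s : Fin (L + 2 * J - 1)}

@[simp]
lemma tannerGraph_adj_inl_inr :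
    (tannerGraph J M L π).Adj (.inl (t, h, m)) (.inr (s, m')) ↔
      ∃ i : Fin J, (s : ℕ) = t + i ∧ m' = π i h t m := by
  simp [tannerGraph]

@[simp]
lemma tannerGraph_adj_inr_inl :
    (tannerGraph J M L π).Adj (.inr (s, m')) (.inl (t, h, m)) ↔
      ∃ i : Fin J, (s : ℕ) = t + i ∧ m' = π i h t m := by
  rw [adj_comm, tannerGraph_adj_inl_inr]

@[simp]
lemma tannerGraph_not_adj_inl_inl {x y : Fin (L + J) × Fin 2 × Fin M} :
    ¬ (tannerGraph J M L π).Adj (.inl x) (.inl y) := by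
  simp [tannerGraph]

@[simp]
lemma tannerGraph_not_adj_inr_inr {x y : Fin (L + 2 * J - 1) × Fin M} :
    ¬ (tannerGraph J M L π).Adj (.inr x) (.inr y) := by
  simp [tannerGraph]

open Classical in
lemma tannerGraph_degree_inl_le : (tannerGraph J M L π).degree (.inl (t, h, m)) ≤ J := by
  rw [← card_neighborFinset_eq_degree]
  calc _ ≤ #((univ : Finset (Fin J)).image fun i : Fin J ↦
        (.inr ((⟨t + i, by omega⟩ : Fin (L + 2 * J - 1)), π i h t m) :
          (Fin (L + J) × Fin 2 × Fin M) ⊕ _)) := by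
        refine card_le_card fun y hy ↦ ?_
        rcases y with y | ⟨s, m'⟩
        · simp at hy
        · obtain ⟨i, hi, rfl⟩ := tannerGraph_adj_inl_inr.1 ((mem_neighborFinset _ _ _).1 hy)
          exact mem_image.2 ⟨i, mem_univ _, by simp [Fin.ext_iff, hi]⟩
    _ ≤ J := card_image_le.trans (by simp)

open Classical in
lemma tannerGraph_degree_inr_le : (tannerGraph J M L π).degree (.inr (s, m')) ≤ 2 * J := by
  rw [← card_neighborFinset_eq_degree]
  calc _ ≤ #(range J ×ˢ (univ : Finset (Fin 2))) := by
        refine card_le_card_of_injOn (Sum.elim (fun x ↦ ((s : ℕ) - x.1, x.2.1)) fun _ ↦ (0, 0))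
          ?_ ?_
        · rintro (⟨t, h, m⟩ | y) hy
          · obtain ⟨i, hi, -⟩ := tannerGraph_adj_inr_inl.1 ((mem_neighborFinset _ _ _).1 hy)
            simp [hi]
          · simp at hy
        · rintro (⟨t, h, m⟩ | y) hy (⟨t', h', m''⟩ | y') hy' heq
          · obtain ⟨i, hi, rfl⟩ := tannerGraph_adj_inr_inl.1 ((mem_neighborFinset _ _ _).1 hy)
            obtain ⟨i', hi', hm⟩ := tannerGraph_adj_inr_inl.1 ((mem_neighborFinset _ _ _).1 hy')
            simp only [Sum.elim_inl, Prod.mk.injEq] at heq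
            obtain rfl : t = t' := Fin.ext (by omega)
            obtain rfl : i = i' := Fin.ext (by omega)
            obtain rfl := heq.2
            simp [(π i h t).injective hm]
          all_goals simp_all
    _ = 2 * J := by simp [mul_comm]

open Classical in
lemma isGrowthWeight_tannerGraph (hJ : 2 ≤ J) :
    (tannerGraph J M L π).IsGrowthWeight (Sum.elim (fun _ ↦ J - 1) fun _ ↦ 2 * J - 1)
      ((2 * J - 1) * (J - 1)) where
  pos := by rintro (_ | _) <;> simp <;> omega
  degree_le := by
    rintro (⟨t, h, m⟩ | ⟨s, m'⟩)
    · have := tannerGraph_degree_inl_le (π := π) (t := t) (h := h) (m := m); simp; omega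
    · have := tannerGraph_degree_inr_le (π := π) (s := s) (m' := m'); simp; omega
  mul_le := by
    rintro (_ | _) (_ | _) hxy
    all_goals first | simp at hxy | simp [mul_comm]

lemma ncard_ball_tannerGraph_le (hJ : 2 ≤ J) (x : (Fin (L + J) × Fin 2 × Fin M) ⊕ _) (k : ℕ) :
    ((tannerGraph J M L π).ball x (k + 1)).ncard ≤
      8 * ((2 * J - 1) * (J - 1)) ^ ((k + 1) / 2) := by
  classical
  refine (isGrowthWeight_tannerGraph hJ).ncard_ball_le ?_ x k
  have : 3 ≤ 2 * J - 1 := by omega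
  nlinarith [Nat.le_sub_of_add_le (show 1 + 1 ≤ J by omega)]

def switchPerm (π : Fin J → Fin 2 → Fin (L + J) → Equiv.Perm (Fin M)) (i₀ : Fin J) (h₀ : Fin 2)
    (t₀ : Fin (L + J)) (m₁ m₂ : Fin M) : Fin J → Fin 2 → Fin (L + J) → Equiv.Perm (Fin M) :=
  fun i h t ↦ if (i, h, t) = (i₀, h₀, t₀) then π i h t * Equiv.swap m₁ m₂ else π i h t

lemma switchPerm_apply {i₀ i : Fin J} {h₀ : Fin 2} {t₀ : Fin (L + J)} {m₁ m₂ : Fin M} :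
    switchPerm π i₀ h₀ t₀ m₁ m₂ i h t m =
      if (i, h, t) = (i₀, h₀, t₀) then π i h t (Equiv.swap m₁ m₂ m) else π i h t m := by
  unfold switchPerm
  split_ifs <;> rfl

lemma exists_eq_of_mem_edgeSet_tannerGraph {e : Sym2 ((Fin (L + J) × Fin 2 × Fin M) ⊕ _)}
    (he : e ∈ (tannerGraph J M L π).edgeSet) :
    ∃ (t : Fin (L + J)) (h : Fin 2) (m : Fin M) (i : Fin J) (s : Fin (L + 2 * J - 1)),
      (s : ℕ) = t + i ∧ e = s(.inl (t, h, m), .inr (s, π i h t m)) := by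
  induction e using Sym2.ind with
  | h x y =>
    rcases x with ⟨t, h, m⟩ | ⟨s, m'⟩ <;> rcases y with ⟨t, h, m⟩ | ⟨s, m'⟩
    · simp at he
    · obtain ⟨i, hi, rfl⟩ := tannerGraph_adj_inl_inr.1 he
      exact ⟨t, h, m, i, s, hi, rfl⟩
    · obtain ⟨i, hi, rfl⟩ := tannerGraph_adj_inr_inl.1 he
      exact ⟨t, h, m, i, s, hi, Sym2.eq_swap⟩
    · simp at he

lemma exists_far_partner_tannerGraph (hJ : 2 ≤ J) {k : ℕ}
    (hM : 24 * ((2 * J - 1) * (J - 1)) ^ ((k + 1) / 2) < M)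
    (u v : (Fin (L + J) × Fin 2 × Fin M) ⊕ _)
    (t₀ : Fin (L + J)) (h₀ : Fin 2) (s₀ : Fin (L + 2 * J - 1)) (σ : Equiv.Perm (Fin M)) :
    ∃ m₂, (k : ℕ∞) < (tannerGraph J M L π).edist u (.inl (t₀, h₀, m₂)) ∧
      (k : ℕ∞) < (tannerGraph J M L π).edist u (.inr (s₀, σ m₂)) ∧
      (k : ℕ∞) < (tannerGraph J M L π).edist v (.inl (t₀, h₀, m₂)) := by
  set G := tannerGraph J M L π
  set f : Fin M → (Fin (L + J) × Fin 2 × Fin M) ⊕ (Fin (L + 2 * J - 1) × Fin M) :=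
    fun m ↦ .inl (t₀, h₀, m)
  set g : Fin M → (Fin (L + J) × Fin 2 × Fin M) ⊕ (Fin (L + 2 * J - 1) × Fin M) :=
    fun m ↦ .inr (s₀, σ m)
  have hf : f.Injective := fun a b hab ↦ by simpa [f] using hab
  have hg : g.Injective := fun a b hab ↦ by simpa [g] using hab
  set Bu := G.ball u (k + 1)
  set Bv := G.ball v (k + 1)
  have hbad : (f ⁻¹' Bu ∪ g ⁻¹' Bu ∪ f ⁻¹' Bv).ncard < M := by
    have hu : Bu.ncard ≤ _ := ncard_ball_tannerGraph_le hJ u k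
    have hv : Bv.ncard ≤ _ := ncard_ball_tannerGraph_le hJ v k
    have hfu : (f ⁻¹' Bu).ncard ≤ Bu.ncard := Set.ncard_le_ncard_of_injOn f (fun _ h ↦ h) hf.injOn
    have hgu : (g ⁻¹' Bu).ncard ≤ Bu.ncard := Set.ncard_le_ncard_of_injOn g (fun _ h ↦ h) hg.injOn
    have hfv : (f ⁻¹' Bv).ncard ≤ Bv.ncard := Set.ncard_le_ncard_of_injOn f (fun _ h ↦ h) hf.injOn
    have h₁ := Set.ncard_union_le (f ⁻¹' Bu ∪ g ⁻¹' Bu) (f ⁻¹' Bv)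
    have h₂ := Set.ncard_union_le (f ⁻¹' Bu) (g ⁻¹' Bu)
    omega
  obtain ⟨m₂, hm₂⟩ : ∃ m₂, m₂ ∉ f ⁻¹' Bu ∪ g ⁻¹' Bu ∪ f ⁻¹' Bv := by
    by_contra! h
    rw [Set.eq_univ_of_forall h, Set.ncard_univ, Nat.card_eq_fintype_card, Fintype.card_fin] at hbad
    exact lt_irrefl _ hbad
  simp only [Set.mem_union, Set.mem_preimage, not_or] at hm₂
  exact ⟨m₂, lt_edist_of_notMem_ball hm₂.1.1, lt_edist_of_notMem_ball hm₂.1.2,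
    lt_edist_of_notMem_ball hm₂.2⟩

section Switch

variable {i₀ : Fin J} {h₀ : Fin 2} {t₀ : Fin (L + J)} {s₀ : Fin (L + 2 * J - 1)} {m₁ m₂ : Fin M}

lemma mem_edgeSet_union_of_switchPerm_adj (hs₀ : (s₀ : ℕ) = t₀ + i₀)
    (hadj : (tannerGraph J M L (switchPerm π i₀ h₀ t₀ m₁ m₂)).Adj (.inl (t, h, m)) (.inr (s, m'))) :
    s((.inl (t, h, m)), .inr (s, m')) ∈ (tannerGraph J M L π).edgeSet ∪
      {s(.inl (t₀, h₀, m₁), .inr (s₀, π i₀ h₀ t₀ m₂)),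
        s(.inl (t₀, h₀, m₂), .inr (s₀, π i₀ h₀ t₀ m₁))} := by
  obtain ⟨i, hi, rfl⟩ := tannerGraph_adj_inl_inr.1 hadj
  rw [switchPerm_apply]
  split_ifs with hit
  · simp only [Prod.mk.injEq] at hit
    obtain ⟨rfl, rfl, rfl⟩ := hit
    obtain rfl : s = s₀ := Fin.ext (by omega)
    by_cases h₁ : m = m₁
    · subst h₁; simp
    by_cases h₂ : m = m₂
    · subst h₂; simp
    left
    rw [Equiv.swap_apply_of_ne_of_ne h₁ h₂]
    exact tannerGraph_adj_inl_inr.2 ⟨i, hi, rfl⟩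
  · exact .inl (tannerGraph_adj_inl_inr.2 ⟨i, hi, rfl⟩)

lemma isSwitch_tannerGraph_switchPerm (hs₀ : (s₀ : ℕ) = t₀ + i₀) (hm : m₁ ≠ m₂) :
    IsSwitch (tannerGraph J M L π) (tannerGraph J M L (switchPerm π i₀ h₀ t₀ m₁ m₂))
      (.inl (t₀, h₀, m₁)) (.inr (s₀, π i₀ h₀ t₀ m₁))
      (.inl (t₀, h₀, m₂)) (.inr (s₀, π i₀ h₀ t₀ m₂)) where
  edgeSet_subset := by
    intro e he
    induction e using Sym2.ind with
    | h x y =>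
      rcases x with x | x <;> rcases y with y | y
      · simp at he
      · exact mem_edgeSet_union_of_switchPerm_adj hs₀ he
      · rw [show s(Sum.inr x, Sum.inl y) = s(Sum.inl y, Sum.inr x) from Sym2.eq_swap]
        exact mem_edgeSet_union_of_switchPerm_adj hs₀ ((mem_edgeSet _).1 he).symm
      · simp at he
  adj := tannerGraph_adj_inl_inr.2 ⟨i₀, hs₀, rfl⟩
  adj₂ := tannerGraph_adj_inl_inr.2 ⟨i₀, hs₀, rfl⟩
  not_adj hadj := by
    obtain ⟨i, hi, hπ⟩ := tannerGraph_adj_inl_inr.1 hadj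
    obtain rfl : i = i₀ := Fin.ext (by omega)
    rw [switchPerm_apply, if_pos rfl, Equiv.swap_apply_left] at hπ
    exact hm ((π i h₀ t₀).injective hπ)
  not_adj₂ hadj := by
    obtain ⟨i, hi, hπ⟩ := tannerGraph_adj_inl_inr.1 hadj
    obtain rfl : i = i₀ := Fin.ext (by omega)
    rw [switchPerm_apply, if_pos rfl, Equiv.swap_apply_right] at hπ
    exact hm ((π i h₀ t₀).injective hπ).symm

end Switch

theorem exists_tannerGraph_succ_le_egirth (hJ : 2 ≤ J) {k : ℕ}
    (hM : 24 * ((2 * J - 1) * (J - 1)) ^ ((k + 1) / 2) < M)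
    (h : ∃ π : Fin J → Fin 2 → Fin (L + J) → Equiv.Perm (Fin M),
      k ≤ (tannerGraph J M L π).egirth) :
    ∃ π : Fin J → Fin 2 → Fin (L + J) → Equiv.Perm (Fin M),
      ((k + 1 : ℕ) : ℕ∞) ≤ (tannerGraph J M L π).egirth := by
  obtain ⟨π, hπ, hmin⟩ :=
    (measure fun π ↦ ((tannerGraph J M L π).shortCycleEdgeSet k).ncard).wf.has_min
      {π | k ≤ (tannerGraph J M L π).egirth} h
  by_cases hempty : (tannerGraph J M L π).shortCycleEdgeSet k = ∅
  · exact ⟨π, by exact_mod_cast le_egirth_of_shortCycleEdgeSet_eq_empty hempty⟩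
  obtain ⟨e, he⟩ := Set.nonempty_iff_ne_empty.2 hempty
  obtain ⟨z, c, -, -, hec⟩ := id he
  obtain ⟨t₀, h₀, m₁, i₀, s₀, hs₀, rfl⟩ :=
    exists_eq_of_mem_edgeSet_tannerGraph (c.edges_subset_edgeSet hec)
  obtain ⟨m₂, huu₂, huv₂, hvu₂⟩ := exists_far_partner_tannerGraph (π := π) hJ hM
    (.inl (t₀, h₀, m₁)) (.inr (s₀, π i₀ h₀ t₀ m₁)) t₀ h₀ s₀ (π i₀ h₀ t₀)
  have hm : m₁ ≠ m₂ := by rintro rfl; simp at huu₂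
  have hs := isSwitch_tannerGraph_switchPerm (π := π) (h₀ := h₀) hs₀ hm
  exact (hmin _ (hs.le_egirth hπ huu₂ huv₂ hvu₂)
    (Set.ncard_lt_ncard (hs.shortCycleEdgeSet_ssubset hπ huu₂ huv₂ hvu₂ he))).elim

theorem exists_tannerGraph_le_egirth (hJ : 2 ≤ J) :
    ∀ K : ℕ, 24 * ((2 * J - 1) * (J - 1)) ^ (K / 2) < M →
      ∃ π : Fin J → Fin 2 → Fin (L + J) → Equiv.Perm (Fin M), K ≤ (tannerGraph J M L π).egirth
  | 0, _ => ⟨fun _ _ _ ↦ 1, by simp⟩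
  | K + 1, hM => by
    refine exists_tannerGraph_succ_le_egirth hJ hM (exists_tannerGraph_le_egirth hJ K ?_)
    refine lt_of_le_of_lt (Nat.mul_le_mul_left 24 (Nat.pow_le_pow_right ?_ (by omega))) hM
    exact Nat.mul_pos (by omega) (by omega)

theorem exists_tannerGraph_two_mul_add_two_le_egirth (hJ : 2 ≤ J) :
    ∃ (r : ℕ) (π : Fin J → Fin 2 → Fin (L + J) → Equiv.Perm (Fin M)),
      M ≤ 24 * ((2 * J - 1) * (J - 1)) ^ (r + 2) ∧
        ((2 * r + 2 : ℕ) : ℕ∞) ≤ (tannerGraph J M L π).egirth := by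
  classical
  have hex : ∃ r, M ≤ 24 * ((2 * J - 1) * (J - 1)) ^ (r + 2) := by
    have hD : 1 < (2 * J - 1) * (J - 1) :=
      Nat.one_lt_mul_iff.2 ⟨by omega, by omega, by omega⟩
    refine ⟨M, ?_⟩
    calc M ≤ ((2 * J - 1) * (J - 1)) ^ M := (Nat.lt_pow_self hD).le
      _ ≤ ((2 * J - 1) * (J - 1)) ^ (M + 2) := Nat.pow_le_pow_right (by omega) (by omega)
      _ ≤ 24 * ((2 * J - 1) * (J - 1)) ^ (M + 2) := Nat.le_mul_of_pos_left _ (by norm_num)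
  rcases hr : Nat.find hex with _ | r
  · exact ⟨0, fun _ _ _ ↦ 1, hr ▸ Nat.find_spec hex, le_trans (by norm_num) three_le_egirth⟩
  · have hlt := not_le.1 (Nat.find_min hex (by omega : r < Nat.find hex))
    obtain ⟨π, hπ⟩ := exists_tannerGraph_le_egirth (L := L) hJ (2 * (r + 1) + 2)
      (by rwa [show (2 * (r + 1) + 2) / 2 = r + 2 by omega])
    exact ⟨r + 1, π, hr ▸ Nat.find_spec hex, hπ⟩

end Tanner

lemma log_div_two_log_le {C D x : ℝ} {n : ℕ} (hD : 1 < D) (hC : 0 < C) (hx : 0 < x)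
    (h : x ≤ C * D ^ n) :
    Real.log x / (2 * Real.log D) ≤ Real.log C / (2 * Real.log D) + n / 2 := by
  have hlogD : 0 < Real.log D := Real.log_pos hD
  have hlog : Real.log x ≤ Real.log C + n * Real.log D := by
    calc Real.log x ≤ Real.log (C * D ^ n) := Real.log_le_log hx h
      _ = Real.log C + n * Real.log D := by
        rw [Real.log_mul hC.ne' (by positivity), Real.log_pow]
  calc Real.log x / (2 * Real.log D) ≤ (Real.log C + n * Real.log D) / (2 * Real.log D) := by
        gcongr
    _ = Real.log C / (2 * Real.log D) + n / 2 := by field_simp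

theorem stmt0_general (J L : ℕ) (hJ : 3 ≤ J) :
    ∃ c₁ : ℝ, ∀ M : ℕ, 1 ≤ M →
      ∃ π : Fin J → Fin 2 → Fin (L + J) → Equiv.Perm (Fin M),
        (∀ g : ℕ, (tannerGraph J M L π).egirth = (g : ℕ∞) →
          (g : ℝ) / 4 >
            Real.log M / (2 * Real.log ((2 * (J : ℝ) - 1) * ((J : ℝ) - 1))) - c₁) ∧
        ∃ l₀ : ℕ,
          ((4 * l₀ + 2 : ℕ) : ℕ∞) ≤ (tannerGraph J M L π).egirth ∧
          (l₀ : ℝ) >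
            Real.log M / (2 * Real.log ((2 * (J : ℝ) - 1) * ((J : ℝ) - 1))) - c₁ := by
  set D := (2 * J - 1) * (J - 1) with hD_def
  have hD : (D : ℝ) = (2 * (J : ℝ) - 1) * ((J : ℝ) - 1) := by
    rw [hD_def, Nat.cast_mul, Nat.cast_sub (by omega), Nat.cast_sub (by omega)]
    push_cast
    ring
  have hD₁ : (1 : ℝ) < D := by exact_mod_cast Nat.one_lt_mul_iff.2 ⟨by omega, by omega, by omega⟩
  rw [← hD]
  refine ⟨Real.log 24 / (2 * Real.log D) + 2, fun M hM ↦ ?_⟩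
  obtain ⟨r, π, hMr, hπ⟩ :=
    exists_tannerGraph_two_mul_add_two_le_egirth (L := L) (M := M) (by omega : 2 ≤ J)
  rw [← hD_def] at hMr
  have hlog := log_div_two_log_le (C := 24) (x := M) (n := r + 2) hD₁ (by norm_num)
    (by exact_mod_cast hM) (by exact_mod_cast hMr)
  refine ⟨π, fun g hg ↦ ?_, r / 2, le_trans (by exact_mod_cast (by omega)) hπ, ?_⟩
  · have : ((2 * r + 2 : ℕ) : ℝ) ≤ g := by rw [hg] at hπ; exact_mod_cast hπ
    push_cast at this hlog
    linarith
  · have : (r : ℝ) ≤ 2 * (r / 2 : ℕ) + 1 := by exact_mod_cast (by omega : r ≤ 2 * (r / 2) + 1)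
    push_cast at hlog
    linarith

/-- For every `J ≥ 3` and termination length `L ≥ 1` there is a constant `c₁`
(independent of `M`) such that for every `M ≥ 1` some choice of permutations
yields a terminated Tanner graph whose girth `g` satisfies
`g / 4 > log M / (2 log((2J-1)(J-1))) - c₁`; equivalently, there is a code in
`C_P(J, 2J, M)` whose number `l₀` of independent (cycle-free) decoding
iterations (guaranteed whenever the girth is at least `4 l₀ + 2`) satisfies
`l₀ > log M / (2 log((2J-1)(J-1))) - c₁`. -/
theorem stmt0 (J L : ℕ) (hJ : 3 ≤ J) (hL : 1 ≤ L) :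
    ∃ c₁ : ℝ, ∀ M : ℕ, 1 ≤ M →
      ∃ π : Fin J → Fin 2 → Fin (L + J) → Equiv.Perm (Fin M),
        (∀ g : ℕ, (tannerGraph J M L π).egirth = (g : ℕ∞) →
          (g : ℝ) / 4 >
            Real.log M / (2 * Real.log ((2 * (J : ℝ) - 1) * ((J : ℝ) - 1))) - c₁) ∧
        ∃ l₀ : ℕ,
          ((4 * l₀ + 2 : ℕ) : ℕ∞) ≤ (tannerGraph J M L π).egirth ∧
          (l₀ : ℝ) >
            Real.log M / (2 * Real.log ((2 * (J : ℝ) - 1) * ((J : ℝ) - 1))) - c₁ :=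
  stmt0_general J L hJ
end

section
/- Let J ≥ 3 be an integer, let A be a real number with 0 < A ≤ 1, let ℓ' be a natural number, and let b : ℕ → ℝ be a sequence with b(ℓ) ≥ 0 for all ℓ and b(ℓ+1) ≤ A·((2J−1)·b(ℓ))^{J−1} for all ℓ ≥ ℓ'. Define the breakout value B_br = A^{−1/(J−1)} · (2J−1)^{−(J−1)/(J−2)}. If b(ℓ') < B_br, then for every ℓ₀ ≥ ℓ' one has b(ℓ₀) ≤ B_br · ( b(ℓ') / B_br )^{(J−1)^{ℓ₀−ℓ'}}; in particular the sequence converges to zero at least double exponentially in the number of iterations. -/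
/-!
If `K * B ^ m ≤ B`, the bound `b n ≤ B * r ^ (m ^ n)` with `r = b 0 / B` propagates through
`b (n + 1) ≤ K * b n ^ m`: raising it to the `m`-th power multiplies the exponent by `m`.
With `K = A (2J-1)^(J-1)` and `m = J - 1` one computes
`K * B_br ^ m = (2J-1)^(-(J-1)/(J-2)) = A^(1/(J-1)) * B_br`, which is at most `B_br` as `A ≤ 1`.
-/

open Real

theorem le_mul_div_pow_pow_of_le_mul_pow {b : ℕ → ℝ} {K B : ℝ} {m : ℕ}
    (hb : ∀ n, 0 ≤ b n) (hK : 0 ≤ K) (hB : 0 < B) (hKB : K * B ^ m ≤ B)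
    (hrec : ∀ n, b (n + 1) ≤ K * b n ^ m) (n : ℕ) :
    b n ≤ B * (b 0 / B) ^ (m ^ n) := by
  induction n with
  | zero => simp [mul_div_cancel₀ _ hB.ne']
  | succ n ih =>
    have hr : 0 ≤ b 0 / B := div_nonneg (hb 0) hB.le
    calc b (n + 1) ≤ K * b n ^ m := hrec n
      _ ≤ K * (B * (b 0 / B) ^ (m ^ n)) ^ m := by gcongr; exact hb n
      _ = K * B ^ m * (b 0 / B) ^ (m ^ (n + 1)) := by rw [mul_pow, ← pow_mul, pow_succ]; ring
      _ ≤ B * (b 0 / B) ^ (m ^ (n + 1)) := by gcongr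

noncomputable def breakout (A c : ℝ) (n : ℕ) : ℝ :=
  A ^ (-1 / (n : ℝ)) * c ^ (-(n : ℝ) / (n - 1))

section Breakout

variable {A c : ℝ} {n : ℕ}

theorem breakout_pos (hA : 0 < A) (hc : 0 < c) : 0 < breakout A c n := by
  unfold breakout; positivity

theorem mul_pow_breakout (hA : 0 < A) (hc : 0 < c) (hn : 2 ≤ n) :
    A * (c * breakout A c n) ^ n = c ^ (-(n : ℝ) / (n - 1)) := by
  have hn0 : (n : ℝ) ≠ 0 := by positivity
  have hn1 : (n : ℝ) - 1 ≠ 0 := by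
    have : (2 : ℝ) ≤ n := by exact_mod_cast hn
    linarith
  have hApow : (A ^ (-1 / (n : ℝ))) ^ n = A⁻¹ := by
    rw [← rpow_natCast, ← rpow_mul hA.le, div_mul_cancel₀ _ hn0, rpow_neg_one]
  have hcpow : c ^ n * (c ^ (-(n : ℝ) / (n - 1))) ^ n = c ^ (-(n : ℝ) / (n - 1)) := by
    rw [← rpow_natCast (c ^ _), ← rpow_mul hc.le, ← rpow_natCast c, ← rpow_add hc]
    congr 1
    field_simp
    ring
  calc A * (c * breakout A c n) ^ n
      = A * (A ^ (-1 / (n : ℝ))) ^ n * (c ^ n * (c ^ (-(n : ℝ) / (n - 1))) ^ n) := by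
        unfold breakout; ring
    _ = c ^ (-(n : ℝ) / (n - 1)) := by rw [hApow, hcpow, mul_inv_cancel₀ hA.ne', one_mul]

theorem mul_pow_breakout_le (hA0 : 0 < A) (hA1 : A ≤ 1) (hc : 0 < c) (hn : 2 ≤ n) :
    A * (c * breakout A c n) ^ n ≤ breakout A c n := by
  have hA : 1 ≤ A ^ (-1 / (n : ℝ)) :=
    one_le_rpow_of_pos_of_le_one_of_nonpos hA0 hA1 (div_nonpos_of_nonpos_of_nonneg
      (by norm_num) n.cast_nonneg)
  rw [mul_pow_breakout hA0 hc hn, breakout]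
  exact le_mul_of_one_le_left (by positivity) hA

end Breakout

theorem stmt2_general (J : ℕ) (hJ : 3 ≤ J) (A : ℝ) (hA0 : 0 < A) (hA1 : A ≤ 1)
    (ℓ' : ℕ) (b : ℕ → ℝ) (hb : ∀ ℓ, 0 ≤ b ℓ)
    (hrec : ∀ ℓ, ℓ' ≤ ℓ → b (ℓ + 1) ≤ A * ((2 * (J : ℝ) - 1) * b ℓ) ^ (J - 1))
    (Bbr : ℝ)
    (hBbr : Bbr = A ^ (-(1 : ℝ) / ((J : ℝ) - 1)) *
      (2 * (J : ℝ) - 1) ^ (-((J : ℝ) - 1) / ((J : ℝ) - 2))) :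
    ∀ ℓ₀, ℓ' ≤ ℓ₀ → b ℓ₀ ≤ Bbr * (b ℓ' / Bbr) ^ ((J - 1) ^ (ℓ₀ - ℓ')) := by
  set c : ℝ := 2 * (J : ℝ) - 1
  have hc : 0 < c := by
    have : (3 : ℝ) ≤ J := by exact_mod_cast hJ
    linarith
  have hBbr : Bbr = breakout A c (J - 1) := by
    rw [hBbr, breakout, Nat.cast_sub (by omega : 1 ≤ J), Nat.cast_one, sub_sub]
    norm_num
  have hB : 0 < Bbr := hBbr ▸ breakout_pos hA0 hc
  have hKB : A * c ^ (J - 1) * Bbr ^ (J - 1) ≤ Bbr := by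
    rw [mul_assoc, ← mul_pow, hBbr]
    exact mul_pow_breakout_le hA0 hA1 hc (by omega)
  intro ℓ₀ hℓ₀
  obtain ⟨k, rfl⟩ := Nat.exists_eq_add_of_le hℓ₀
  rw [Nat.add_sub_cancel_left]
  refine le_mul_div_pow_pow_of_le_mul_pow (b := fun k => b (ℓ' + k)) (fun _ => hb _)
    (by positivity) hB hKB (fun k => ?_) k
  simpa only [mul_pow, mul_assoc, ← add_assoc] using hrec (ℓ' + k) (Nat.le_add_right _ _)

/-- Double-exponential convergence below the breakout value: if `J ≥ 3`, the channel
Bhattacharyya parameter satisfies `0 < A ≤ 1`, the nonnegative sequence `b` satisfies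
the density-evolution recursion bound `b (ℓ+1) ≤ A ((2J-1) b ℓ)^(J-1)` for `ℓ ≥ ℓ'`,
and `b ℓ'` is below the breakout value `B_br = A^(-1/(J-1)) (2J-1)^(-(J-1)/(J-2))`,
then `b ℓ₀ ≤ B_br (b ℓ' / B_br)^((J-1)^(ℓ₀-ℓ'))` for all `ℓ₀ ≥ ℓ'`. -/
theorem stmt2 (J : ℕ) (hJ : 3 ≤ J) (A : ℝ) (hA0 : 0 < A) (hA1 : A ≤ 1)
    (ℓ' : ℕ) (b : ℕ → ℝ) (hb : ∀ ℓ, 0 ≤ b ℓ)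
    (hrec : ∀ ℓ, ℓ' ≤ ℓ → b (ℓ + 1) ≤ A * ((2 * (J : ℝ) - 1) * b ℓ) ^ (J - 1))
    (Bbr : ℝ)
    (hBbr : Bbr = A ^ (-(1 : ℝ) / ((J : ℝ) - 1)) *
      (2 * (J : ℝ) - 1) ^ (-((J : ℝ) - 1) / ((J : ℝ) - 2)))
    (hinit : b ℓ' < Bbr) :
    ∀ ℓ₀, ℓ' ≤ ℓ₀ → b ℓ₀ ≤ Bbr * (b ℓ' / Bbr) ^ ((J - 1) ^ (ℓ₀ - ℓ')) :=
  stmt2_general J hJ A hA0 hA1 ℓ' b hb hrec Bbr hBbr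
end

section
/- Let J ≥ 3 be an integer, let A be a real number with 0 < A ≤ 1, let ℓ' be a natural number, and let b : ℕ → ℝ be a sequence with b(ℓ) ≥ 0 for all ℓ and b(ℓ+1) ≤ A·((2J−1)·b(ℓ))^{J−1} for all ℓ ≥ ℓ'. If b(ℓ') < B_br, where B_br = A^{−1/(J−1)} · (2J−1)^{−(J−1)/(J−2)}, then b(ℓ) tends to 0 as ℓ → ∞. -/
/-!
Write `c = 2J - 1`. The recursion reads `b (ℓ+1) ≤ (A c^(J-1) b ℓ^(J-2)) · b ℓ`, so as long as the
factor `r = A c^(J-1) b ℓ'^(J-2)` is below `1` the sequence is dominated by the geometric sequence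
`b ℓ' · r^k`: inductively, this bound keeps `b` below `b ℓ'`, hence the factor below `r`. The breakout value
is exactly where this factor reaches `A^(1/(J-1)) ≤ 1`.
-/

open Filter Topology

section GeometricDecay

variable {b : ℕ → ℝ} {K : ℝ} {m : ℕ}

lemma le_mul_pow_of_le_mul_pow_succ (hK : 0 ≤ K) (hb : ∀ n, 0 ≤ b n)
    (hrec : ∀ n, b (n + 1) ≤ K * b n ^ (m + 1)) (hr : K * b 0 ^ m ≤ 1) (n : ℕ) :
    b n ≤ b 0 * (K * b 0 ^ m) ^ n := by
  set r := K * b 0 ^ m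
  have hr0 : 0 ≤ r := mul_nonneg hK (pow_nonneg (hb 0) m)
  induction n with
  | zero => simp
  | succ n ih =>
    have hbn_le : b n ≤ b 0 := ih.trans (mul_le_of_le_one_right (hb 0) (pow_le_one₀ hr0 hr))
    have hfactor : K * b n ^ m ≤ r := mul_le_mul_of_nonneg_left (pow_le_pow_left₀ (hb n) hbn_le m) hK
    calc b (n + 1) ≤ K * b n ^ m * b n := by rw [mul_assoc, ← pow_succ]; exact hrec n
      _ ≤ r * (b 0 * r ^ n) := mul_le_mul hfactor ih (hb n) hr0
      _ = b 0 * r ^ (n + 1) := by ring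

lemma tendsto_zero_of_le_mul_pow_succ (hK : 0 ≤ K) (hb : ∀ n, 0 ≤ b n)
    (hrec : ∀ n, b (n + 1) ≤ K * b n ^ (m + 1)) (hr : K * b 0 ^ m < 1) :
    Tendsto b atTop (𝓝 0) := by
  have hgeom : Tendsto (fun n ↦ b 0 * (K * b 0 ^ m) ^ n) atTop (𝓝 0) := by
    simpa using (tendsto_pow_atTop_nhds_zero_of_lt_one
      (mul_nonneg hK (pow_nonneg (hb 0) m)) hr).const_mul (b 0)
  exact squeeze_zero hb (le_mul_pow_of_le_mul_pow_succ hK hb hrec hr.le) hgeom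

end GeometricDecay

lemma mul_rpow_mul_breakout_rpow {A c x : ℝ} (hA : 0 < A) (hc : 0 < c) (hx : 2 < x) :
    A * c ^ (x - 1) * (A ^ (-1 / (x - 1)) * c ^ (-(x - 1) / (x - 2))) ^ (x - 2) =
      A ^ (1 / (x - 1)) := by
  have hx1 : x - 1 ≠ 0 := by linarith
  have hx2 : x - 2 ≠ 0 := by linarith
  rw [Real.mul_rpow (by positivity) (by positivity), ← Real.rpow_mul hA.le,
    ← Real.rpow_mul hc.le, div_mul_cancel₀ _ hx2]
  calc A * c ^ (x - 1) * (A ^ (-1 / (x - 1) * (x - 2)) * c ^ (-(x - 1)))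
      = A ^ (1 + -1 / (x - 1) * (x - 2)) * (c ^ (x - 1) * c ^ (-(x - 1))) := by
        rw [Real.rpow_add hA, Real.rpow_one]; ring
    _ = A ^ (1 / (x - 1)) := by
        rw [← Real.rpow_add hc, add_neg_cancel, Real.rpow_zero, mul_one]
        congr 1; field_simp; ring

/-- Convergence to zero below the breakout value: if `J ≥ 3`, the channel Bhattacharyya
parameter satisfies `0 < A ≤ 1`, the nonnegative sequence `b` satisfies the
density-evolution recursion bound `b (ℓ+1) ≤ A ((2J-1) b ℓ)^(J-1)` for `ℓ ≥ ℓ'`, and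
`b ℓ'` is below the breakout value `B_br = A^(-1/(J-1)) (2J-1)^(-(J-1)/(J-2))`, then
`b ℓ → 0` as `ℓ → ∞`. -/
theorem stmt3 (J : ℕ) (hJ : 3 ≤ J) (A : ℝ) (hA0 : 0 < A) (hA1 : A ≤ 1)
    (ℓ' : ℕ) (b : ℕ → ℝ) (hb : ∀ ℓ, 0 ≤ b ℓ)
    (hrec : ∀ ℓ, ℓ' ≤ ℓ → b (ℓ + 1) ≤ A * ((2 * (J : ℝ) - 1) * b ℓ) ^ (J - 1))
    (Bbr : ℝ)
    (hBbr : Bbr = A ^ (-(1 : ℝ) / ((J : ℝ) - 1)) *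
      (2 * (J : ℝ) - 1) ^ (-((J : ℝ) - 1) / ((J : ℝ) - 2)))
    (hinit : b ℓ' < Bbr) :
    Filter.Tendsto b Filter.atTop (nhds 0) := by
  set m := J - 2
  have hJm : J - 1 = m + 1 := by omega
  have hm : (m : ℝ) = (J : ℝ) - 2 := by simp only [m]; push_cast [show 2 ≤ J by omega]; ring
  set c : ℝ := 2 * (J : ℝ) - 1
  have hJ3 : (3 : ℝ) ≤ J := by exact_mod_cast hJ
  have hc : 0 < c := by linarith
  set K := A * c ^ (m + 1)
  have hK : 0 < K := by positivity
  have hshift : ∀ n, b (n + 1 + ℓ') ≤ K * b (n + ℓ') ^ (m + 1) := fun n ↦ calc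
    b (n + 1 + ℓ') = b (n + ℓ' + 1) := by rw [add_right_comm]
    _ ≤ A * (c * b (n + ℓ')) ^ (J - 1) := hrec _ (Nat.le_add_left ℓ' n)
    _ = K * b (n + ℓ') ^ (m + 1) := by rw [hJm, mul_pow, mul_assoc]
  have hbreakout : K * Bbr ^ m = A ^ (1 / ((J : ℝ) - 1)) := by
    have hJ1 : (J : ℝ) - 1 = ((m + 1 : ℕ) : ℝ) := by push_cast; linarith
    rw [← mul_rpow_mul_breakout_rpow hA0 hc (x := J) (by linarith), ← hBbr, ← hm, hJ1,
      Real.rpow_natCast, Real.rpow_natCast]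
  have hr : K * b (0 + ℓ') ^ m < 1 := calc
    K * b (0 + ℓ') ^ m < K * Bbr ^ m := by
      rw [zero_add]; gcongr; exacts [hb ℓ', by omega]
    _ ≤ 1 := hbreakout ▸ Real.rpow_le_one hA0.le hA1 (div_nonneg zero_le_one (by linarith))
  exact (tendsto_add_atTop_iff_nat ℓ').mp
    (tendsto_zero_of_le_mul_pow_succ hK.le (fun n ↦ hb _) hshift hr)
end

section
/- Let n ≥ 1 and let p₁,…,pₙ ∈ (0,1). Set zᵢ = log((1−pᵢ)/pᵢ) and r = (1 − ∏_{i=1}^{n}(1 − 2·pᵢ))/2. Then r ∈ (0,1) and 2·arctanh( ∏_{i=1}^{n} tanh(zᵢ/2) ) = log((1−r)/r). In other words, the check node update rule β = 2·arctanh(∏ tanh(zᵢ/2)) produces exactly the log-likelihood ratio of the modulo-2 sum of n independent bits whose individual probabilities of equaling 1 are p₁,…,pₙ. -/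
/-!
Each `1 - 2 pᵢ` lies in `(-1, 1)`, and `zᵢ = log((1 - pᵢ)/pᵢ) = 2 artanh(1 - 2 pᵢ)`, so
`tanh(zᵢ/2) = 1 - 2 pᵢ`. The product of these numbers is `1 - 2 r`, again in `(-1, 1)`, which
gives `r ∈ (0, 1)`, and the same identity read backwards turns `2 arctanh(1 - 2 r)` into
`log((1 - r)/r)`.
-/

noncomputable def arctanh (x : ℝ) : ℝ := Real.log ((1 + x) / (1 - x)) / 2

open Finset Real

lemma abs_prod_lt_one {ι R : Type*} [CommRing R] [LinearOrder R] [IsStrictOrderedRing R]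
    {s : Finset ι} {f : ι → R} (hs : s.Nonempty) (hf : ∀ i ∈ s, |f i| < 1) :
    |∏ i ∈ s, f i| < 1 := by
  classical
  obtain ⟨j, hj⟩ := hs
  rw [abs_prod, ← mul_prod_erase s _ hj]
  calc |f j| * ∏ i ∈ s.erase j, |f i|
      ≤ |f j| * 1 :=
        mul_le_mul_of_nonneg_left
          (prod_le_one (fun i _ => abs_nonneg _) fun i hi => (hf i (mem_of_mem_erase hi)).le)
          (abs_nonneg _)
    _ < 1 := by rw [mul_one]; exact hf j hj

lemma arctanh_eq_artanh {x : ℝ} (hx : x ∈ Set.Icc (-1) 1) : arctanh x = artanh x := by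
  rw [arctanh, artanh_eq_half_log hx]
  ring

-- Both sides vanish at `p = 0` through `log 0 = 0` and division by zero.
lemma log_one_sub_div_eq_two_mul_arctanh (p : ℝ) :
    log ((1 - p) / p) = 2 * arctanh (1 - 2 * p) := by
  rcases eq_or_ne p 0 with rfl | hp
  · simp [arctanh]
  · rw [arctanh, show (1 + (1 - 2 * p)) / (1 - (1 - 2 * p)) = (1 - p) / p by field_simp; ring]
    ring

lemma tanh_half_log_one_sub_div {p : ℝ} (hp : p ∈ Set.Ioo 0 1) :
    tanh (log ((1 - p) / p) / 2) = 1 - 2 * p := by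
  have hx : 1 - 2 * p ∈ Set.Ioo (-1) 1 := ⟨by linarith [hp.2], by linarith [hp.1]⟩
  rw [log_one_sub_div_eq_two_mul_arctanh, mul_div_cancel_left₀ _ two_ne_zero,
    arctanh_eq_artanh (Set.Ioo_subset_Icc_self hx), tanh_artanh hx]

/-- The belief-propagation check node update rule `β = 2 arctanh(∏ tanh(zᵢ/2))`
produces exactly the log-likelihood ratio of the modulo-2 sum of `n` independent bits
with parameters `p₁, …, pₙ ∈ (0,1)`: with `zᵢ = log((1-pᵢ)/pᵢ)` and
`r = (1 - ∏ (1 - 2 pᵢ))/2`, we have `r ∈ (0,1)` and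
`2 arctanh(∏ tanh(zᵢ/2)) = log((1-r)/r)`. -/
theorem stmt9 (n : ℕ) (hn : 1 ≤ n) (p : Fin n → ℝ) (hp : ∀ i, p i ∈ Set.Ioo (0 : ℝ) 1)
    (z : Fin n → ℝ) (hz : ∀ i, z i = Real.log ((1 - p i) / p i))
    (r : ℝ) (hr : r = (1 - ∏ i, (1 - 2 * p i)) / 2) :
    r ∈ Set.Ioo (0 : ℝ) 1 ∧
      2 * arctanh (∏ i, Real.tanh (z i / 2)) = Real.log ((1 - r) / r) := by
  have hprod : ∏ i, tanh (z i / 2) = 1 - 2 * r := by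
    rw [hr, mul_div_cancel₀ _ two_ne_zero, sub_sub_cancel]
    exact prod_congr rfl fun i _ => by rw [hz i, tanh_half_log_one_sub_div (hp i)]
  have hbound : |∏ i, (1 - 2 * p i)| < 1 :=
    abs_prod_lt_one (univ_nonempty_iff.mpr ⟨⟨0, hn⟩⟩) fun i _ =>
      abs_lt.mpr ⟨by linarith [(hp i).2], by linarith [(hp i).1]⟩
  rw [abs_lt] at hbound
  refine ⟨⟨by linarith, by linarith⟩, ?_⟩
  rw [hprod, log_one_sub_div_eq_two_mul_arctanh]
end
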